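/- arXiv:math/0608138 — 2 statements merged into one kernel-verified Lean document; each statement's English description precedes it below -/
import Mathlib

section
/- For every n ∈ ℕ, 0 < p < 1 with q = 1 − p, and every t with −(1 − p) < t < p: d_TV(Bi(n, p − t), Bi(n, p)) ≤ |t| ( √n/√(pq) + (p − t)/(pq) + √((p − t)(q + t))/(pq√n) ). -/
open MeasureTheory ProbabilityTheory

noncomputable def dTV (P Q : Measure ℝ) : ℝ :=
  ⨆ A : {A : Set ℝ // MeasurableSet A}, |(P A.1).toReal - (Q A.1).toReal|

noncomputable def dloc (P Q : Measure ℝ) : ℝ :=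
  ⨆ x : ℝ, |(P (Set.Ico x (x + 1))).toReal - (Q (Set.Ico x (x + 1))).toReal|

/-- `D1 μ = ‖μ * (δ₁ - δ₀)‖`, the total variation norm of the signed measure
`μ*δ₁ - μ`; since this signed measure has total mass `0`, its variation norm equals
`2 * sup_A |(μ*δ₁)(A) - μ(A)|`. -/
noncomputable def D1 (μ : Measure ℝ) : ℝ :=
  2 * ⨆ A : {A : Set ℝ // MeasurableSet A},
    |(μ.map (· + 1) A.1).toReal - (μ A.1).toReal|

/-- `D2 μ = ‖μ * (δ₁ - δ₀)^{*2}‖ = ‖μ*δ₂ - 2 μ*δ₁ + μ‖`. -/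
noncomputable def D2 (μ : Measure ℝ) : ℝ :=
  2 * ⨆ A : {A : Set ℝ // MeasurableSet A},
    |(μ.map (· + 2) A.1).toReal - 2 * (μ.map (· + 1) A.1).toReal + (μ A.1).toReal|

/-- The binomial distribution `Bi(n, p)` as a measure on `ℝ`. -/
noncomputable def binomMeasure (n : ℕ) (p : ℝ) : Measure ℝ :=
  Measure.sum (fun k : Fin (n + 1) =>
    (ENNReal.ofReal ((n.choose k) * p ^ (k : ℕ) * (1 - p) ^ (n - (k : ℕ)))) •
      Measure.dirac ((k : ℕ) : ℝ))

/-- The centered binomial distribution `B̂i(n, p)`, i.e. `Bi(n,p)` shifted by `-np`. -/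
noncomputable def centeredBinom (n : ℕ) (p : ℝ) : Measure ℝ :=
  (binomMeasure n p).map (fun x => x - n * p)

/-! Write `b_k(s)` for the weights of `Bi(n, s)`. Since they sum to `1` for every `s`, the total
variation distance between `Bi(n, a)` and `Bi(n, b)` is at most `½ ∑ₖ |b_k(b) - b_k(a)|`.
From `b_k'(s) = b_k(s) (k - n s) / (s (1 - s))`, Cauchy–Schwarz and the variance `n s (1 - s)`,
the `ℓ¹`-speed `∑ₖ |b_k'(s)|` is at most `√n / √(s (1 - s))`, the derivative of
`2 √n arcsin √s`; so `∑ₖ |b_k(b) - b_k(a)| ≤ 2 √n (arcsin √b - arcsin √a)`. Finally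
`(arcsin √b - arcsin √a) (√(a (1 - a)) + √(b (1 - b))) ≤ b - a`, which for `{a, b} = {p - t, p}`
gives `d_TV ≤ |t| √n / √(p q)`, already the first term of the bound. -/

open Finset Real

noncomputable def binomProb (n k : ℕ) (s : ℝ) : ℝ := n.choose k * s ^ k * (1 - s) ^ (n - k)

section binomProb

variable {n k : ℕ} {s : ℝ}

lemma binomProb_nonneg (hs₀ : 0 ≤ s) (hs₁ : s ≤ 1) : 0 ≤ binomProb n k s := by
  have : 0 ≤ 1 - s := sub_nonneg.2 hs₁
  unfold binomProb
  positivity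

lemma binomProb_eq_eval_bernsteinPolynomial :
    binomProb n k s = (bernsteinPolynomial ℝ n k).eval s := by
  simp [binomProb, bernsteinPolynomial]

variable (n s)

lemma sum_binomProb : ∑ k ∈ range (n + 1), binomProb n k s = 1 := by
  simpa [Polynomial.eval_finsetSum, binomProb_eq_eval_bernsteinPolynomial] using
    congrArg (Polynomial.eval s) (bernsteinPolynomial.sum ℝ n)

lemma sum_sq_mul_binomProb :
    ∑ k ∈ range (n + 1), ((n : ℝ) * s - k) ^ 2 * binomProb n k s = n * s * (1 - s) := by
  simpa [Polynomial.eval_finsetSum, binomProb_eq_eval_bernsteinPolynomial] using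
    congrArg (Polynomial.eval s) (bernsteinPolynomial.variance ℝ n)

variable {n s}

lemma sum_binomProb_mul_abs_sub_le (hs₀ : 0 ≤ s) (hs₁ : s ≤ 1) :
    ∑ k ∈ range (n + 1), binomProb n k s * |(k : ℝ) - n * s| ≤ √(n * s * (1 - s)) := by
  have hp : ∀ k ∈ range (n + 1), 0 ≤ binomProb n k s := fun _ _ ↦ binomProb_nonneg hs₀ hs₁
  have hCS := sum_sq_le_sum_mul_sum_of_sq_le_mul (range (n + 1)) hp
    (r := fun k ↦ binomProb n k s * |(k : ℝ) - n * s|)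
    (g := fun k ↦ ((n : ℝ) * s - k) ^ 2 * binomProb n k s)
    (fun k hk ↦ mul_nonneg (sq_nonneg _) (hp k hk))
    (fun k _ ↦ by rw [mul_pow, sq_abs]; exact le_of_eq (by ring))
  rw [sum_binomProb, sum_sq_mul_binomProb, one_mul] at hCS
  exact le_sqrt_of_sq_le hCS

lemma natCast_mul_pow_sub_one {K : Type*} [Field K] {x : K} (hx : x ≠ 0) (m : ℕ) :
    (m : K) * x ^ (m - 1) = m * x ^ m / x := by
  cases m with
  | zero => simp
  | succ m => rw [pow_succ, ← mul_assoc, mul_div_cancel_right₀ _ hx, Nat.add_sub_cancel]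

lemma hasDerivAt_binomProb (hk : k ≤ n) (hs₀ : s ≠ 0) (hs₁ : s ≠ 1) :
    HasDerivAt (binomProb n k) (binomProb n k s * (k - n * s) / (s * (1 - s))) s := by
  have h1s : 1 - s ≠ 0 := sub_ne_zero.2 hs₁.symm
  have h := ((hasDerivAt_pow k s).fun_mul
    (((hasDerivAt_id' s).const_sub 1).fun_pow (n - k))).const_mul (n.choose k : ℝ)
  have hf : binomProb n k = fun x ↦ (n.choose k : ℝ) * (x ^ k * (1 - x) ^ (n - k)) := by
    ext x; simp only [binomProb, mul_assoc]
  rw [hf]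
  refine h.congr_deriv ?_
  rw [natCast_mul_pow_sub_one hs₀, natCast_mul_pow_sub_one h1s, Nat.cast_sub hk]
  field_simp
  ring

end binomProb

lemma hasDerivAt_arcsin_sqrt {x : ℝ} (hx₀ : 0 < x) (hx₁ : x < 1) :
    HasDerivAt (fun s ↦ arcsin √s) (1 / (2 * √(x * (1 - x)))) x := by
  have hsqrt₁ : √x ≠ 1 := fun h ↦ hx₁.ne (sqrt_eq_one.1 h)
  have hsqrt₀ : √x ≠ -1 := by linarith [sqrt_nonneg x]
  refine ((hasDerivAt_arcsin hsqrt₀ hsqrt₁).comp x (hasDerivAt_sqrt hx₀.ne')).congr_deriv ?_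
  have : 0 < √(1 - x) := sqrt_pos.2 (by linarith)
  rw [sq_sqrt hx₀.le, sqrt_mul hx₀.le]
  field_simp

lemma sum_abs_deriv_binomProb_le (n : ℕ) {x : ℝ} (hx₀ : 0 < x) (hx₁ : x < 1) :
    ∑ k ∈ range (n + 1), |binomProb n k x * (k - n * x) / (x * (1 - x))|
      ≤ √n / √(x * (1 - x)) := by
  have hv : 0 < x * (1 - x) := mul_pos hx₀ (by linarith)
  calc ∑ k ∈ range (n + 1), |binomProb n k x * (k - n * x) / (x * (1 - x))|
      = (∑ k ∈ range (n + 1), binomProb n k x * |(k : ℝ) - n * x|) / (x * (1 - x)) := by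
        rw [sum_div]
        refine sum_congr rfl fun k _ ↦ ?_
        rw [abs_div, abs_mul, abs_of_nonneg (binomProb_nonneg hx₀.le hx₁.le), abs_of_pos hv]
    _ ≤ √(n * x * (1 - x)) / (x * (1 - x)) := by
        gcongr
        exact sum_binomProb_mul_abs_sub_le hx₀.le hx₁.le
    _ = √n / √(x * (1 - x)) := by
        rw [mul_assoc, sqrt_mul (Nat.cast_nonneg n), mul_div_assoc, sqrt_div_self', mul_one_div]

lemma sum_abs_binomProb_sub_le (n : ℕ) {a b : ℝ} (ha : 0 < a) (hab : a ≤ b) (hb : b < 1) :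
    ∑ k ∈ range (n + 1), |binomProb n k b - binomProb n k a|
      ≤ 2 * √n * (arcsin √b - arcsin √a) := by
  set ε : ℕ → ℝ := fun k ↦ SignType.sign (binomProb n k b - binomProb n k a)
  set G : ℝ → ℝ := fun s ↦ 2 * √n * arcsin √s - ∑ k ∈ range (n + 1), ε k * binomProb n k s
  have hG : ∀ x ∈ Set.Ioo (0 : ℝ) 1, HasDerivAt G (2 * √n * (1 / (2 * √(x * (1 - x))))
      - ∑ k ∈ range (n + 1), ε k * (binomProb n k x * (k - n * x) / (x * (1 - x)))) x := by
    rintro x ⟨hx₀, hx₁⟩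
    refine ((hasDerivAt_arcsin_sqrt hx₀ hx₁).const_mul _).sub (HasDerivAt.fun_sum fun k hk ↦ ?_)
    exact (hasDerivAt_binomProb (Nat.lt_succ_iff.1 (mem_range.1 hk)) hx₀.ne' hx₁.ne).const_mul _
  have hG_mono : MonotoneOn G (Set.Ioo 0 1) := by
    refine monotoneOn_of_hasDerivWithinAt_nonneg (convex_Ioo 0 1)
      (fun x hx ↦ (hG x hx).continuousAt.continuousWithinAt)
      (fun x hx ↦ (hG x (interior_subset hx)).hasDerivWithinAt) fun x hx ↦ ?_
    rw [interior_Ioo] at hx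
    have hε : ∀ k, |ε k| ≤ 1 := fun k ↦ by
      rcases lt_trichotomy (binomProb n k b - binomProb n k a) 0 with h | h | h <;> simp [ε, h]
    have hsum := sum_abs_deriv_binomProb_le n hx.1 hx.2
    have hle : ∑ k ∈ range (n + 1), ε k * (binomProb n k x * (k - n * x) / (x * (1 - x)))
        ≤ ∑ k ∈ range (n + 1), |binomProb n k x * (k - n * x) / (x * (1 - x))| :=
      sum_le_sum fun k _ ↦ (le_abs_self _).trans <| by
        rw [abs_mul]; exact mul_le_of_le_one_left (abs_nonneg _) (hε k)
    have : 2 * √n * (1 / (2 * √(x * (1 - x)))) = √n / √(x * (1 - x)) := by field_simp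
    linarith
  have hGab := hG_mono ⟨ha, hab.trans_lt hb⟩ ⟨ha.trans_le hab, hb⟩ hab
  have habs : ∑ k ∈ range (n + 1), |binomProb n k b - binomProb n k a|
      = ∑ k ∈ range (n + 1), ε k * binomProb n k b
        - ∑ k ∈ range (n + 1), ε k * binomProb n k a := by
    rw [← sum_sub_distrib]
    exact sum_congr rfl fun k _ ↦ by rw [← mul_sub, sign_mul_self]
  simp only [G] at hGab
  linarith

lemma mul_cos_le_sin {x : ℝ} (hx₀ : 0 ≤ x) (hx : x < π / 2) : x * cos x ≤ sin x := by
  have hcos : 0 < cos x := cos_pos_of_mem_Ioo ⟨by linarith [pi_pos], hx⟩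
  calc x * cos x ≤ tan x * cos x := mul_le_mul_of_nonneg_right (le_tan hx₀ hx) hcos.le
    _ = sin x := by rw [tan_eq_sin_div_cos, div_mul_cancel₀ _ hcos.ne']

/-- The factorisations `sin² β - sin² α = sin (β - α) sin (β + α)` and
`sin α cos α + sin β cos β = cos (β - α) sin (β + α)` reduce this to `mul_cos_le_sin`. -/
lemma sub_mul_sin_mul_cos_add_le {α β : ℝ} (hα : 0 ≤ α) (hαβ : α ≤ β) (hβ : β < π / 2) :
    (β - α) * (sin α * cos α + sin β * cos β) ≤ sin β ^ 2 - sin α ^ 2 := by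
  have hsq : sin β ^ 2 - sin α ^ 2 = sin (β - α) * sin (β + α) := by
    rw [sin_sub, sin_add]
    linear_combination sin α ^ 2 * sin_sq_add_cos_sq β - sin β ^ 2 * sin_sq_add_cos_sq α
  have hsc : sin α * cos α + sin β * cos β = cos (β - α) * sin (β + α) := by
    rw [cos_sub, sin_add]
    linear_combination -(sin β * cos β) * sin_sq_add_cos_sq α - sin α * cos α * sin_sq_add_cos_sq β
  have hsin : 0 ≤ sin (β + α) := sin_nonneg_of_nonneg_of_le_pi (by linarith) (by linarith)
  rw [hsq, hsc, ← mul_assoc]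
  exact mul_le_mul_of_nonneg_right (mul_cos_le_sin (by linarith) (by linarith)) hsin

lemma arcsin_sqrt_sub_mul_le {a b : ℝ} (ha : 0 ≤ a) (hab : a ≤ b) (hb : b < 1) :
    (arcsin √b - arcsin √a) * (√(a * (1 - a)) + √(b * (1 - b))) ≤ b - a := by
  have hsin_cos : ∀ x, 0 ≤ x → x ≤ 1 →
      sin (arcsin √x) = √x ∧ sin (arcsin √x) * cos (arcsin √x) = √(x * (1 - x)) := by
    intro x hx₀ hx₁
    have hs : sin (arcsin √x) = √x :=
      sin_arcsin (by linarith [sqrt_nonneg x]) (sqrt_le_one.2 hx₁)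
    refine ⟨hs, ?_⟩
    rw [hs, cos_arcsin, sq_sqrt hx₀, sqrt_mul hx₀]
  obtain ⟨hsa, hsca⟩ := hsin_cos a ha (hab.trans hb.le)
  obtain ⟨hsb, hscb⟩ := hsin_cos b (ha.trans hab) hb.le
  have hβ : arcsin √b < π / 2 := arcsin_lt_pi_div_two.2 ((sqrt_lt' one_pos).2 (by simpa using hb))
  have h := sub_mul_sin_mul_cos_add_le (arcsin_nonneg.2 (sqrt_nonneg a))
    (monotone_arcsin (sqrt_le_sqrt hab)) hβ
  rwa [hsca, hscb, hsa, hsb, sq_sqrt ha, sq_sqrt (ha.trans hab)] at h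

lemma sum_abs_binomProb_sub_mul_le (n : ℕ) {a b : ℝ} (ha₀ : 0 < a) (ha₁ : a < 1)
    (hb₀ : 0 < b) (hb₁ : b < 1) :
    (∑ k ∈ range (n + 1), |binomProb n k b - binomProb n k a|)
      * (√(a * (1 - a)) + √(b * (1 - b))) ≤ 2 * √n * |b - a| := by
  wlog hab : a ≤ b generalizing a b
  · simpa only [abs_sub_comm, add_comm] using this hb₀ hb₁ ha₀ ha₁ (le_of_not_ge hab)
  calc (∑ k ∈ range (n + 1), |binomProb n k b - binomProb n k a|)
        * (√(a * (1 - a)) + √(b * (1 - b)))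
      ≤ 2 * √n * (arcsin √b - arcsin √a) * (√(a * (1 - a)) + √(b * (1 - b))) := by
        gcongr
        exact sum_abs_binomProb_sub_le n ha₀ hab hb₁
    _ = 2 * √n * ((arcsin √b - arcsin √a) * (√(a * (1 - a)) + √(b * (1 - b)))) := by ring
    _ ≤ 2 * √n * |b - a| := by
        gcongr
        exact (arcsin_sqrt_sub_mul_le ha₀.le hab hb₁).trans (le_abs_self _)

lemma abs_sum_filter_le_half_sum_abs {ι K : Type*} [Field K] [LinearOrder K]
    [IsStrictOrderedRing K] (s : Finset ι) (p : ι → Prop) [DecidablePred p] {f : ι → K}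
    (hf : ∑ i ∈ s, f i = 0) :
    |∑ i ∈ s with p i, f i| ≤ (∑ i ∈ s, |f i|) / 2 := by
  have hsplit := sum_filter_add_sum_filter_not s p f
  have habs := sum_filter_add_sum_filter_not s p (fun i ↦ |f i|)
  have h₁ := abs_sum_le_sum_abs f (s.filter p)
  have h₂ := abs_sum_le_sum_abs f (s.filter (¬p ·))
  rw [hf, add_eq_zero_iff_eq_neg] at hsplit
  rw [hsplit, abs_neg] at h₁ ⊢
  linarith [abs_nonneg (∑ i ∈ s with p i, f i)]

open scoped Classical in
lemma binomMeasure_apply_toReal (n : ℕ) {s : ℝ} (hs₀ : 0 ≤ s) (hs₁ : s ≤ 1) {A : Set ℝ}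
    (hA : MeasurableSet A) :
    (binomMeasure n s A).toReal = ∑ k ∈ range (n + 1) with ((k : ℕ) : ℝ) ∈ A, binomProb n k s := by
  rw [binomMeasure, Measure.sum_apply _ hA, tsum_fintype,
    ENNReal.toReal_sum fun k _ ↦ by
      simpa only [Measure.smul_apply, smul_eq_mul] using
        ENNReal.mul_ne_top ENNReal.ofReal_ne_top (measure_ne_top _ _),
    sum_filter, ← Fin.sum_univ_eq_sum_range]
  refine sum_congr rfl fun k _ ↦ ?_
  by_cases hk : ((k : ℕ) : ℝ) ∈ A
  · simp only [hk, if_true, Measure.smul_apply, Measure.dirac_apply_of_mem hk, smul_eq_mul,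
      mul_one]
    exact ENNReal.toReal_ofReal (binomProb_nonneg hs₀ hs₁)
  · simp [hk, Measure.dirac_apply' _ hA]

lemma dTV_binomMeasure_le (n : ℕ) {a b : ℝ} (ha₀ : 0 ≤ a) (ha₁ : a ≤ 1) (hb₀ : 0 ≤ b)
    (hb₁ : b ≤ 1) :
    dTV (binomMeasure n a) (binomMeasure n b)
      ≤ (∑ k ∈ range (n + 1), |binomProb n k a - binomProb n k b|) / 2 := by
  refine ciSup_le fun ⟨A, hA⟩ ↦ ?_
  classical
  rw [binomMeasure_apply_toReal n ha₀ ha₁ hA, binomMeasure_apply_toReal n hb₀ hb₁ hA,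
    ← sum_sub_distrib]
  exact abs_sum_filter_le_half_sum_abs _ _ (by simp only [sum_sub_distrib, sum_binomProb, sub_self])

/-- Lemma 5.2 (total variation part): comparison of two binomial distributions
with different success probabilities. -/
theorem stmt14 (n : ℕ) (p t : ℝ) (hp : 0 < p) (hp1 : p < 1)
    (ht1 : -(1 - p) < t) (ht2 : t < p) :
    dTV (binomMeasure n (p - t)) (binomMeasure n p) ≤
      |t| * (Real.sqrt n / Real.sqrt (p * (1 - p))
        + (p - t) / (p * (1 - p))
        + Real.sqrt ((p - t) * ((1 - p) + t)) / (p * (1 - p) * Real.sqrt n)) := by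
  have hpt₀ : 0 < p - t := by linarith
  have hpt₁ : p - t < 1 := by linarith
  have hpq : 0 < p * (1 - p) := mul_pos hp (by linarith)
  set S := ∑ k ∈ range (n + 1), |binomProb n k (p - t) - binomProb n k p|
  have hS : S * √(p * (1 - p)) ≤ 2 * √n * |t| := by
    have h := sum_abs_binomProb_sub_mul_le n hp hp1 hpt₀ hpt₁
    rw [show p - t - p = -t by ring, abs_neg] at h
    refine le_trans ?_ h
    gcongr
    exact le_add_of_nonneg_right (sqrt_nonneg _)
  have hdTV : dTV (binomMeasure n (p - t)) (binomMeasure n p) ≤ |t| * (√n / √(p * (1 - p))) :=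
    calc dTV (binomMeasure n (p - t)) (binomMeasure n p) ≤ S / 2 :=
          dTV_binomMeasure_le n hpt₀.le hpt₁.le hp.le hp1.le
      _ ≤ |t| * (√n / √(p * (1 - p))) := by
          rw [mul_div_assoc', le_div_iff₀ (sqrt_pos.2 hpq)]
          linarith
  refine hdTV.trans (mul_le_mul_of_nonneg_left ?_ (abs_nonneg t))
  have h₁ : 0 ≤ (p - t) / (p * (1 - p)) := by positivity
  have h₂ : 0 ≤ √((p - t) * ((1 - p) + t)) / (p * (1 - p) * √n) := by positivity
  linarith
end

section
/- Let a ∈ ℝ and let ĝ : ℤ + a → ℝ be bounded. Define f : ℝ → ℝ by f(w + x) := Θĝ(w−1) + xΔĝ(w−1) + (1/2)x²Δ²ĝ(w−1) for w ∈ ℤ + a and x ∈ [0,1), where Δĝ(w) := ĝ(w+1) − ĝ(w), Δ² := Δ∘Δ, and Θĝ(w) := (ĝ(w+1) + ĝ(w))/2. Then (i) f is continuously differentiable with f(w) = Θĝ(w−1) and f'(w) = Δĝ(w−1) for all w ∈ ℤ + a; (ii) f' is absolutely continuous with almost-everywhere second derivative f''(w + x) = Δ²ĝ(w−1) for w ∈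 ℤ + a, 0 ≤ x < 1; and (iii) for every random variable U taking values in a lattice of ℝ with span 1 and every z ∈ ℝ, |E f''(U + z)| ≤ min( ‖Δĝ‖ D¹(L(U)) , ‖ĝ‖ D²(L(U)) ), where ‖·‖ is the supremum norm. -/
open MeasureTheory ProbabilityTheory

/-!
On each cell `[k + a, k + 1 + a)` the interpolant is a quadratic polynomial, and consecutive
pieces agree to first order at the lattice points; gluing them gives a `C¹` function whose
derivative is continuous, piecewise linear, with piecewise constant right derivative `Δ²ĝ`.

For the estimate, write `f''(u) = h(u + 1) - h(u)` with a step function `|h| ≤ ‖Δĝ‖`, and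
`f''(u) = G(u + 2) - 2 G(u + 1) + G(u)` with `|G| ≤ ‖ĝ‖`. Then `E f''(U + z)` is the integral
of a bounded function against `L(U) * (δ₁ - δ₀)`, resp. `L(U) * (δ₁ - δ₀)^{*2}`, and a
Hahn decomposition bounds such an integral by the sup norm times the total variation.
-/

open Set Topology

section TotalVariation

lemma integrable_of_abs_le {X : Type*} [MeasurableSpace X] {ν : Measure X} [IsFiniteMeasure ν]
    {F : X → ℝ} (hF : Measurable F) {M : ℝ} (hM : ∀ x, |F x| ≤ M) : Integrable F ν :=
  .of_bound hF.aestronglyMeasurable M (ae_of_all _ hM)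

lemma bddAbove_range_abs_sub_measure (α β : Measure ℝ) [IsFiniteMeasure α]
    [IsFiniteMeasure β] :
    BddAbove (range fun A : {A : Set ℝ // MeasurableSet A} =>
      |(α A.1).toReal - (β A.1).toReal|) := by
  refine ⟨α.real univ + β.real univ, ?_⟩
  rintro _ ⟨A, rfl⟩
  have hα : α.real A.1 ≤ α.real univ := measureReal_mono (subset_univ _)
  have hβ : β.real A.1 ≤ β.real univ := measureReal_mono (subset_univ _)
  simp only [← measureReal_def, abs_le]
  constructor <;> linarith [measureReal_nonneg (μ := α) (s := A.1),
    measureReal_nonneg (μ := β) (s := A.1)]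

lemma measureReal_sub_le_dTV (α β : Measure ℝ) [IsFiniteMeasure α] [IsFiniteMeasure β]
    {A : Set ℝ} (hA : MeasurableSet A) : α.real A - β.real A ≤ dTV α β :=
  (le_abs_self _).trans (le_ciSup (bddAbove_range_abs_sub_measure α β) ⟨A, hA⟩)

lemma abs_integral_sub_integral_le_of_le {X : Type*} [MeasurableSpace X] {ν ρ : Measure X}
    [IsFiniteMeasure ρ] (hνρ : ν ≤ ρ) {F : X → ℝ} (hF : Measurable F) {M : ℝ}
    (hM : ∀ x, |F x| ≤ M) :
    |∫ x, F x ∂ρ - ∫ x, F x ∂ν| ≤ M * (ρ.real univ - ν.real univ) := by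
  have : IsFiniteMeasure ν := isFiniteMeasure_of_le ρ hνρ
  have hFint : ∀ (μ : Measure X) [IsFiniteMeasure μ], Integrable F μ := fun _ _ =>
    integrable_of_abs_le hF hM
  have hsplit : ∫ x, F x ∂ρ - ∫ x, F x ∂ν = ∫ x, F x ∂(ρ - ν) := by
    conv_lhs => rw [← Measure.sub_add_cancel_of_le hνρ]
    rw [integral_add_measure (hFint _) (hFint _), add_sub_cancel_right]
  rw [hsplit, ← Real.norm_eq_abs]
  calc ‖∫ x, F x ∂(ρ - ν)‖ ≤ M * (ρ - ν).real univ :=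
        norm_integral_le_of_norm_le_const (ae_of_all _ hM)
    _ = M * (ρ.real univ - ν.real univ) := by
        rw [measureReal_def, Measure.sub_apply MeasurableSet.univ hνρ,
          ENNReal.toReal_sub_of_le (hνρ univ) (measure_ne_top ρ univ)]
        rfl

theorem abs_integral_sub_integral_le_two_mul_dTV {α β : Measure ℝ} [IsFiniteMeasure α]
    [IsFiniteMeasure β] (huniv : α univ = β univ) {F : ℝ → ℝ} (hF : Measurable F) {M : ℝ}
    (hM : ∀ x, |F x| ≤ M) :
    |∫ x, F x ∂α - ∫ x, F x ∂β| ≤ 2 * M * dTV α β := by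
  obtain ⟨S, hS, hβα, hαβ⟩ := hahn_decomposition α β
  have hle : β.restrict S ≤ α.restrict S := Measure.le_iff.2 fun t ht => by
    simp only [Measure.restrict_apply ht]
    exact hβα _ (ht.inter hS) inter_subset_right
  have hle' : α.restrict Sᶜ ≤ β.restrict Sᶜ := Measure.le_iff.2 fun t ht => by
    simp only [Measure.restrict_apply ht]
    exact hαβ _ (ht.inter hS.compl) inter_subset_right
  have hS_part := abs_integral_sub_integral_le_of_le hle hF hM
  have hSc_part := abs_integral_sub_integral_le_of_le hle' hF hM
  simp only [measureReal_restrict_apply_univ] at hS_part hSc_part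
  have hcompl : β.real Sᶜ - α.real Sᶜ = α.real S - β.real S := by
    rw [measureReal_compl hS, measureReal_compl hS, measureReal_def α univ, huniv,
      ← measureReal_def]
    ring
  have hM0 : 0 ≤ M := (abs_nonneg _).trans (hM 0)
  have hdTV := mul_le_mul_of_nonneg_left (measureReal_sub_le_dTV α β hS) hM0
  have hFint : ∀ (μ : Measure ℝ) [IsFiniteMeasure μ], Integrable F μ := fun _ _ =>
    integrable_of_abs_le hF hM
  rw [← integral_add_compl hS (hFint α), ← integral_add_compl hS (hFint β)]
  rw [hcompl] at hSc_part
  rw [abs_le] at hS_part hSc_part ⊢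
  constructor <;> linarith [hS_part.1, hS_part.2, hSc_part.1, hSc_part.2]

end TotalVariation

section LatticeGlue

variable {E : Type*} (a : ℝ)

noncomputable def latticeGlue (P : ℤ → ℝ → E) (u : ℝ) : E := P ⌊u - a⌋ u

variable {a}

lemma eq_latticeGlue_of_forall {P : ℤ → ℝ → E} {f : ℝ → E}
    (h : ∀ (k : ℤ) (x : ℝ), 0 ≤ x → x < 1 → f (k + a + x) = P k (k + a + x)) :
    f = latticeGlue a P := funext fun u => by
  have hu : (⌊u - a⌋ : ℝ) + a + Int.fract (u - a) = u := by rw [Int.fract]; ring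
  simpa only [hu, latticeGlue] using
    h ⌊u - a⌋ (Int.fract (u - a)) (Int.fract_nonneg _) (Int.fract_lt_one _)

lemma latticeGlue_eq_ceil {P : ℤ → ℝ → E}
    (hP : ∀ k : ℤ, P k (k + a) = P (k - 1) (k + a)) (u : ℝ) :
    latticeGlue a P u = P (⌈u - a⌉ - 1) u := by
  by_cases hu : u - a ∈ range Int.cast
  · obtain ⟨k, hk⟩ := hu
    obtain rfl : u = k + a := by linarith
    simp [latticeGlue, hP]
  · simp [latticeGlue, (Int.ceil_eq_floor_add_one_iff_notMem _).2 hu]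

lemma latticeGlue_eventuallyEq_nhdsGE (P : ℤ → ℝ → E) (u : ℝ) :
    latticeGlue a P =ᶠ[𝓝[≥] u] P ⌊u - a⌋ := by
  have hu : u < ⌊u - a⌋ + a + 1 := by linarith [Int.lt_floor_add_one (u - a)]
  filter_upwards [Ico_mem_nhdsGE hu] with v hv
  rw [latticeGlue,
    Int.floor_eq_iff.2 ⟨by linarith [Int.floor_le (u - a), hv.1], by linarith [hv.2]⟩]

lemma latticeGlue_eventuallyEq_nhdsLE {P : ℤ → ℝ → E}
    (hP : ∀ k : ℤ, P k (k + a) = P (k - 1) (k + a)) (u : ℝ) :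
    latticeGlue a P =ᶠ[𝓝[≤] u] P (⌈u - a⌉ - 1) := by
  have hu : ⌈u - a⌉ - 1 + a < u := by linarith [Int.ceil_lt_add_one (u - a)]
  filter_upwards [Ioc_mem_nhdsLE hu] with v hv
  rw [latticeGlue_eq_ceil hP,
    Int.ceil_eq_iff.2 ⟨by linarith [hv.1], by linarith [hv.2, Int.le_ceil (u - a)]⟩]

lemma continuous_latticeGlue [TopologicalSpace E] {P : ℤ → ℝ → E}
    (hP : ∀ k : ℤ, P k (k + a) = P (k - 1) (k + a)) (hc : ∀ k, Continuous (P k)) :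
    Continuous (latticeGlue a P) :=
  continuous_iff_continuousAt.2 fun u => continuousAt_iff_continuous_left_right.2
    ⟨(hc _).continuousWithinAt.congr_of_eventuallyEq (latticeGlue_eventuallyEq_nhdsLE hP u)
      (latticeGlue_eq_ceil hP u),
    (hc _).continuousWithinAt.congr_of_eventuallyEq (latticeGlue_eventuallyEq_nhdsGE P u) rfl⟩

variable [NormedAddCommGroup E] [NormedSpace ℝ E] {P P' : ℤ → ℝ → E}

lemma hasDerivWithinAt_latticeGlue_Ici (hd : ∀ k u, HasDerivAt (P k) (P' k u) u) (u : ℝ) :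
    HasDerivWithinAt (latticeGlue a P) (latticeGlue a P' u) (Ici u) u :=
  (hd _ u).hasDerivWithinAt.congr_of_eventuallyEq (latticeGlue_eventuallyEq_nhdsGE P u) rfl

lemma hasDerivAt_latticeGlue (hP : ∀ k : ℤ, P k (k + a) = P (k - 1) (k + a))
    (hP' : ∀ k : ℤ, P' k (k + a) = P' (k - 1) (k + a))
    (hd : ∀ k u, HasDerivAt (P k) (P' k u) u) (u : ℝ) :
    HasDerivAt (latticeGlue a P) (latticeGlue a P' u) u := by
  have hleft : HasDerivWithinAt (latticeGlue a P) (latticeGlue a P' u) (Iic u) u := by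
    rw [latticeGlue_eq_ceil hP' u]
    exact (hd _ u).hasDerivWithinAt.congr_of_eventuallyEq
      (latticeGlue_eventuallyEq_nhdsLE hP u) (latticeGlue_eq_ceil hP u)
  simpa using hleft.union (hasDerivWithinAt_latticeGlue_Ici hd u)

end LatticeGlue

section Interpolation

variable (s : ℤ → ℝ) (a : ℝ)

noncomputable def interpPiece (k : ℤ) (u : ℝ) : ℝ :=
  (s k + s (k - 1)) / 2 + (u - (k + a)) * (s k - s (k - 1))
    + (u - (k + a)) ^ 2 / 2 * (s (k + 1) - 2 * s k + s (k - 1))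

noncomputable def interpPieceDeriv (k : ℤ) (u : ℝ) : ℝ :=
  (s k - s (k - 1)) + (u - (k + a)) * (s (k + 1) - 2 * s k + s (k - 1))

noncomputable def interp : ℝ → ℝ := latticeGlue a (interpPiece s a)

noncomputable def interpDeriv : ℝ → ℝ := latticeGlue a (interpPieceDeriv s a)

noncomputable def interpSecondDeriv : ℝ → ℝ :=
  latticeGlue a fun k _ => s (k + 1) - 2 * s k + s (k - 1)

lemma interpPiece_lattice_eq (k : ℤ) :
    interpPiece s a k (k + a) = interpPiece s a (k - 1) (k + a) := by
  simp only [interpPiece, sub_add_cancel]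
  push_cast
  ring

lemma interpPieceDeriv_lattice_eq (k : ℤ) :
    interpPieceDeriv s a k (k + a) = interpPieceDeriv s a (k - 1) (k + a) := by
  simp only [interpPieceDeriv, sub_add_cancel]
  push_cast
  ring

lemma hasDerivAt_interpPiece (k : ℤ) (u : ℝ) :
    HasDerivAt (interpPiece s a k) (interpPieceDeriv s a k u) u := by
  have hx : HasDerivAt (fun u : ℝ => u - (k + a)) 1 u := (hasDerivAt_id u).sub_const _
  refine (((hx.mul_const (s k - s (k - 1))).const_add ((s k + s (k - 1)) / 2)).add
    (((hx.pow 2).div_const 2).mul_const (s (k + 1) - 2 * s k + s (k - 1)))).congr_deriv ?_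
  simp only [interpPieceDeriv]
  norm_num

lemma hasDerivAt_interpPieceDeriv (k : ℤ) (u : ℝ) :
    HasDerivAt (interpPieceDeriv s a k) (s (k + 1) - 2 * s k + s (k - 1)) u := by
  have hx : HasDerivAt (fun u : ℝ => u - (k + a)) 1 u := (hasDerivAt_id u).sub_const _
  unfold interpPieceDeriv
  simpa using (hx.mul_const (s (k + 1) - 2 * s k + s (k - 1))).const_add (s k - s (k - 1))

lemma hasDerivAt_interp (u : ℝ) : HasDerivAt (interp s a) (interpDeriv s a u) u :=
  hasDerivAt_latticeGlue (interpPiece_lattice_eq s a) (interpPieceDeriv_lattice_eq s a)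
    (hasDerivAt_interpPiece s a) u

lemma deriv_interp : deriv (interp s a) = interpDeriv s a :=
  funext fun u => (hasDerivAt_interp s a u).deriv

lemma continuous_interpDeriv : Continuous (interpDeriv s a) :=
  continuous_latticeGlue (interpPieceDeriv_lattice_eq s a) fun k => by
    unfold interpPieceDeriv
    fun_prop

lemma contDiff_interp : ContDiff ℝ 1 (interp s a) :=
  contDiff_one_iff_deriv.2 ⟨fun u => (hasDerivAt_interp s a u).differentiableAt,
    deriv_interp s a ▸ continuous_interpDeriv s a⟩

lemma interp_intCast_add (k : ℤ) : interp s a (k + a) = (s k + s (k - 1)) / 2 := by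
  simp [interp, latticeGlue, interpPiece]

lemma interpDeriv_intCast_add (k : ℤ) : interpDeriv s a (k + a) = s k - s (k - 1) := by
  simp [interpDeriv, latticeGlue, interpPieceDeriv]

lemma measurable_interpSecondDeriv : Measurable (interpSecondDeriv s a) :=
  (measurable_from_top (f := fun k : ℤ => s (k + 1) - 2 * s k + s (k - 1))).comp
    (measurable_sub_const a).floor

variable {s} in
lemma abs_interpSecondDeriv_le {C : ℝ} (hs : ∀ k, |s k| ≤ C) (u : ℝ) :
    |interpSecondDeriv s a u| ≤ 4 * C := by
  have h1 := abs_le.1 (hs (⌊u - a⌋ + 1))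
  have h2 := abs_le.1 (hs ⌊u - a⌋)
  have h3 := abs_le.1 (hs (⌊u - a⌋ - 1))
  rw [interpSecondDeriv, latticeGlue, abs_le]
  constructor <;> linarith

variable {s} in
lemma interpDeriv_sub_eq_integral {C : ℝ} (hs : ∀ k, |s k| ≤ C) (u v : ℝ) :
    interpDeriv s a v - interpDeriv s a u = ∫ w in u..v, interpSecondDeriv s a w := by
  refine (intervalIntegral.integral_eq_sub_of_hasDeriv_right
    (continuous_interpDeriv s a).continuousOn
    (fun w _ => (hasDerivWithinAt_latticeGlue_Ici (hasDerivAt_interpPieceDeriv s a) w).mono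
      Ioi_subset_Ici_self) ?_).symm
  exact intervalIntegrable_const (c := 4 * C) |>.mono_fun
    (measurable_interpSecondDeriv s a).aestronglyMeasurable (ae_of_all _ fun w => by
      simpa only [Real.norm_eq_abs, interpSecondDeriv] using
        (abs_interpSecondDeriv_le a hs w).trans (le_abs_self _))

end Interpolation

section SmoothingBounds

variable {s : ℤ → ℝ} (a : ℝ) {μ : Measure ℝ} [IsProbabilityMeasure μ]

lemma abs_integral_interpSecondDeriv_le_D1 {M : ℝ} (hM : ∀ k, |s (k + 1) - s k| ≤ M)
    (z : ℝ) :
    |∫ u, interpSecondDeriv s a (u + z) ∂μ| ≤ M * D1 μ := by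
  set F : ℝ → ℝ := fun u => s ⌊u + z - a⌋ - s (⌊u + z - a⌋ - 1)
  have hF : Measurable F :=
    (measurable_from_top (f := fun k : ℤ => s k - s (k - 1))).comp
      ((measurable_add_const z).sub_const a).floor
  have hFM : ∀ u, |F u| ≤ M := fun u => by simpa using hM (⌊u + z - a⌋ - 1)
  have hshift (u : ℝ) : interpSecondDeriv s a (u + z) = F (u + 1) - F u := by
    simp only [interpSecondDeriv, latticeGlue, F]
    rw [show u + 1 + z - a = u + z - a + 1 by ring, Int.floor_add_one, add_sub_cancel_right]
    ring
  have : IsProbabilityMeasure (μ.map (· + 1)) := Measure.isProbabilityMeasure_map (by fun_prop)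
  calc |∫ u, interpSecondDeriv s a (u + z) ∂μ|
      = |∫ u, F u ∂(μ.map (· + 1)) - ∫ u, F u ∂μ| := by
        simp only [hshift]
        have hF_shift : Integrable (fun u => F (u + 1)) μ :=
          integrable_of_abs_le (hF.comp (measurable_add_const 1)) fun _ => hFM _
        rw [integral_sub hF_shift (integrable_of_abs_le hF hFM),
          integral_map (by fun_prop) hF.aestronglyMeasurable]
    _ ≤ 2 * M * dTV (μ.map (· + 1)) μ :=
        abs_integral_sub_integral_le_two_mul_dTV (by simp) hF hFM
    _ = M * D1 μ := by rw [D1, dTV]; ring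

lemma abs_integral_interpSecondDeriv_le_D2 {M : ℝ} (hM : ∀ k, |s k| ≤ M) (z : ℝ) :
    |∫ u, interpSecondDeriv s a (u + z) ∂μ| ≤ M * D2 μ := by
  set G : ℝ → ℝ := fun u => s (⌊u + z - a⌋ - 1)
  have hG : Measurable G :=
    (measurable_from_top (f := fun k : ℤ => s (k - 1))).comp
      ((measurable_add_const z).sub_const a).floor
  have hGM : ∀ u, |G u| ≤ M := fun u => hM _
  have hshift (u : ℝ) : interpSecondDeriv s a (u + z) = G (u + 2) - 2 * G (u + 1) + G u := by
    simp only [interpSecondDeriv, latticeGlue, G]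
    rw [show u + 2 + z - a = u + z - a + 1 + 1 by ring,
      show u + 1 + z - a = u + z - a + 1 by ring, Int.floor_add_one, Int.floor_add_one]
    ring_nf
  have : IsProbabilityMeasure (μ.map (· + 1)) := Measure.isProbabilityMeasure_map (by fun_prop)
  have : IsProbabilityMeasure (μ.map (· + 2)) := Measure.isProbabilityMeasure_map (by fun_prop)
  have hint : ∀ (ν : Measure ℝ) [IsFiniteMeasure ν], Integrable G ν := fun _ _ =>
    integrable_of_abs_le hG hGM
  have hint_shift (c : ℝ) : Integrable (fun u => G (u + c)) μ :=
    integrable_of_abs_le (hG.comp (measurable_add_const c)) fun _ => hGM _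
  have hint_diff : Integrable (fun u => G (u + 2) - 2 * G (u + 1)) μ :=
    (hint_shift 2).sub ((hint_shift 1).const_mul 2)
  calc |∫ u, interpSecondDeriv s a (u + z) ∂μ|
      = |∫ u, G u ∂(μ.map (· + 2) + μ)
          - ∫ u, G u ∂(μ.map (· + 1) + μ.map (· + 1))| := by
        simp only [hshift]
        rw [integral_add hint_diff (hint μ),
          integral_sub (hint_shift 2) ((hint_shift 1).const_mul 2), integral_const_mul,
          integral_add_measure (hint _) (hint _),
          integral_add_measure (hint _) (hint _),
          integral_map (by fun_prop) hG.aestronglyMeasurable,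
          integral_map (by fun_prop) hG.aestronglyMeasurable]
        ring_nf
    _ ≤ 2 * M * dTV (μ.map (· + 2) + μ) (μ.map (· + 1) + μ.map (· + 1)) :=
        abs_integral_sub_integral_le_two_mul_dTV (by simp) hG hGM
    _ = M * D2 μ := by
        rw [D2, dTV, mul_comm 2 M, mul_assoc]
        congr 3 with A
        rw [Measure.add_apply, Measure.add_apply, ENNReal.toReal_add (measure_ne_top _ _)
          (measure_ne_top _ _), ENNReal.toReal_add (measure_ne_top _ _) (measure_ne_top _ _)]
        ring_nf

end SmoothingBounds

/-- The interpolation construction (2.11)–(2.13) and estimate (2.15).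
For bounded `ĝ` on the lattice `ℤ + a`, the interpolation `f` with
`f(w+x) = Θĝ(w−1) + x Δĝ(w−1) + x²/2 Δ²ĝ(w−1)` is `C¹` with
`f(w) = Θĝ(w−1)`, `f'(w) = Δĝ(w−1)`; `f'` is absolutely continuous with
a.e. second derivative `f''(w+x) = Δ²ĝ(w−1)` (expressed through the
fundamental theorem of calculus `f'(v) − f'(u) = ∫_u^v f''`); and for every
random variable `U` on a lattice of span `1` and every `z ∈ ℝ`,
`|E f''(U+z)| ≤ min(‖Δĝ‖ D¹(L(U)), ‖ĝ‖ D²(L(U)))`. -/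
theorem stmt18 (a : ℝ) (g : ℝ → ℝ)
    (hbdd : ∃ C : ℝ, ∀ k : ℤ, |g ((k : ℝ) + a)| ≤ C)
    (f f'' : ℝ → ℝ)
    (hf : ∀ (k : ℤ) (x : ℝ), 0 ≤ x → x < 1 →
      f (((k : ℝ) + a) + x) =
        (g ((k : ℝ) + a) + g (((k : ℝ) + a) - 1)) / 2
        + x * (g ((k : ℝ) + a) - g (((k : ℝ) + a) - 1))
        + x ^ 2 / 2 *
          (g (((k : ℝ) + a) + 1) - 2 * g ((k : ℝ) + a) + g (((k : ℝ) + a) - 1)))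
    (hf'' : ∀ u : ℝ, f'' u =
      g (((⌊u - a⌋ : ℝ) + a) + 1) - 2 * g ((⌊u - a⌋ : ℝ) + a)
        + g (((⌊u - a⌋ : ℝ) + a) - 1)) :
    ContDiff ℝ 1 f ∧
    (∀ k : ℤ, f ((k : ℝ) + a) =
      (g ((k : ℝ) + a) + g (((k : ℝ) + a) - 1)) / 2) ∧
    (∀ k : ℤ, deriv f ((k : ℝ) + a) =
      g ((k : ℝ) + a) - g (((k : ℝ) + a) - 1)) ∧
    (∀ u v : ℝ, deriv f v - deriv f u = ∫ s in u..v, f'' s) ∧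
    (∀ (Ω : Type) (_ : MeasureSpace Ω),
      IsProbabilityMeasure (ℙ : Measure Ω) →
      ∀ U : Ω → ℝ, Measurable U →
      (∃ c : ℝ, ∀ᵐ ω ∂(ℙ : Measure Ω), ∃ k : ℤ, U ω = (k : ℝ) + c) →
      ∀ z : ℝ,
      |∫ ω, f'' (U ω + z) ∂(ℙ : Measure Ω)| ≤
        min ((⨆ k : ℤ, |g (((k : ℝ) + a) + 1) - g ((k : ℝ) + a)|) *
              D1 ((ℙ : Measure Ω).map U))
            ((⨆ k : ℤ, |g ((k : ℝ) + a)|) * D2 ((ℙ : Measure Ω).map U))) := by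
  obtain ⟨C, hC⟩ := hbdd
  set s : ℤ → ℝ := fun k => g (k + a) with hs
  have hs_succ (k : ℤ) : s (k + 1) = g ((k : ℝ) + a + 1) := by
    simp only [hs]; push_cast; ring_nf
  have hs_pred (k : ℤ) : s (k - 1) = g ((k : ℝ) + a - 1) := by
    simp only [hs]; push_cast; ring_nf
  obtain rfl : f = interp s a := eq_latticeGlue_of_forall fun k x hx0 hx1 => by
    rw [hf k x hx0 hx1, interpPiece, hs_succ, hs_pred, add_sub_cancel_left]
  obtain rfl : f'' = interpSecondDeriv s a := funext fun u => by
    rw [hf'' u, interpSecondDeriv, latticeGlue, hs_succ, hs_pred]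
  have hbdd_diff : BddAbove (range fun k : ℤ => |g ((k : ℝ) + a + 1) - g ((k : ℝ) + a)|) :=
    ⟨C + C, by
      rintro _ ⟨k, rfl⟩
      exact (abs_sub _ _).trans (add_le_add (hs_succ k ▸ hC (k + 1)) (hC k))⟩
  have hbdd_abs : BddAbove (range fun k : ℤ => |g ((k : ℝ) + a)|) :=
    ⟨C, by rintro _ ⟨k, rfl⟩; exact hC k⟩
  refine ⟨contDiff_interp s a, fun k => by rw [interp_intCast_add, hs_pred],
    fun k => by rw [deriv_interp, interpDeriv_intCast_add, hs_pred],
    fun u v => by rw [deriv_interp]; exact interpDeriv_sub_eq_integral a hC u v, ?_⟩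
  intro Ω _ _ U hU _ z
  have : IsProbabilityMeasure ((ℙ : Measure Ω).map U) :=
    Measure.isProbabilityMeasure_map hU.aemeasurable
  rw [← integral_map (f := fun u => interpSecondDeriv s a (u + z)) hU.aemeasurable
    ((measurable_interpSecondDeriv s a).comp (measurable_add_const z)).aestronglyMeasurable]
  exact le_min
    (abs_integral_interpSecondDeriv_le_D1 a (fun k => hs_succ k ▸ le_ciSup hbdd_diff k) z)
    (abs_integral_interpSecondDeriv_le_D2 a (fun k => le_ciSup hbdd_abs k) z)
end
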